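/- arXiv:math/0703406 — 3 statements merged into one kernel-verified Lean document; each statement's English description precedes it below -/
import Mathlib

section
/- Let u be a smooth solution of the cheap Navier–Stokes equation ∂_t u − νΔu + (1/2)|∇|(u²) = 0 on a bounded domain Ω with Dirichlet boundary conditions, where |∇| = (−Δ)^{1/2}. Let φ₁ ≥ 0 be the first Dirichlet eigenfunction of −Δ with eigenvalue λ₁. If ∫_Ω u(x,0)φ₁(x)dx = −M with M sufficiently large (depending on ν, λ₁ and ∫φ₁), then the solution cannot remain smooth (finite) for all time; it blows up in finite time. -/
open MeasureTheory

noncomputable section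

variable {d : ℕ}

/-- The Laplacian of a scalar function on `ℝ^d`. -/
def lap (f : EuclideanSpace ℝ (Fin d) → ℝ) (x : EuclideanSpace ℝ (Fin d)) : ℝ :=
  ∑ i : Fin d,
    fderiv ℝ (fun y => fderiv ℝ f y (EuclideanSpace.single i (1:ℝ))) x
      (EuclideanSpace.single i (1:ℝ))

open Set Filter Topology

lemma oneD_integral_deriv_eq_zero {U : Set ℝ} (hUo : IsOpen U)
    (hUb : Bornology.IsBounded U) {v v' : ℝ → ℝ}
    (hv : ∀ x, HasDerivAt v (v' x) x) (hv' : Continuous v')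
    (h0 : ∀ x ∈ frontier U, v x = 0) :
    ∫ x in U, v' x = 0 := by
  classical
  set 𝒞 : Set (Set ℝ) := (fun x => connectedComponentIn U x) '' U with h𝒞
  have hCopen : ∀ C ∈ 𝒞, IsOpen C := by
    rintro C ⟨x, hxU, rfl⟩; exact hUo.connectedComponentIn
  have hCne : ∀ C ∈ 𝒞, C.Nonempty := by
    rintro C ⟨x, hxU, rfl⟩; exact ⟨x, mem_connectedComponentIn hxU⟩
  have hCsub : ∀ C ∈ 𝒞, C ⊆ U := by
    rintro C ⟨x, hxU, rfl⟩; exact connectedComponentIn_subset U x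
  -- each component is an open interval with endpoints in the frontier
  have hmemC : ∀ C ∈ 𝒞, ∃ a b : ℝ, a ∈ frontier U ∧ b ∈ frontier U ∧ C = Ioo a b := by
    rintro C hC
    obtain ⟨x, hxU, rfl⟩ := hC
    set C := connectedComponentIn U x with hCdef
    have hCo : IsOpen C := hUo.connectedComponentIn
    have hCne' : C.Nonempty := ⟨x, mem_connectedComponentIn hxU⟩
    have hCsub' : C ⊆ U := connectedComponentIn_subset U x
    have hCb : Bornology.IsBounded C := hUb.subset hCsub'
    have hbb : BddBelow C := hCb.bddBelow
    have hba : BddAbove C := hCb.bddAbove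
    have hoc : OrdConnected C := (isPreconnected_connectedComponentIn).ordConnected
    set a := sInf C with ha
    set b := sSup C with hb
    have hanotC : a ∉ C := by
      intro haC
      obtain ⟨ε, hε, hball⟩ := Metric.isOpen_iff.1 hCo a haC
      have : a - ε / 2 ∈ C := by
        apply hball
        show dist _ _ < ε
        rw [Real.dist_eq]
        have h2 : a - ε / 2 - a = -(ε / 2) := by ring
        rw [h2, abs_neg, abs_of_pos (half_pos hε)]; linarith
      have := csInf_le hbb this
      linarith [half_pos hε]
    have hbnotC : b ∉ C := by
      intro hbC
      obtain ⟨ε, hε, hball⟩ := Metric.isOpen_iff.1 hCo b hbC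
      have : b + ε / 2 ∈ C := by
        apply hball
        show dist _ _ < ε
        rw [Real.dist_eq]
        have h2 : b + ε / 2 - b = ε / 2 := by ring
        rw [h2, abs_of_pos (half_pos hε)]; linarith
      have := le_csSup hba this
      linarith [half_pos hε]
    have hC_eq : C = Ioo a b := by
      apply Subset.antisymm
      · intro c hc
        refine ⟨lt_of_le_of_ne (csInf_le hbb hc) ?_, lt_of_le_of_ne (le_csSup hba hc) ?_⟩
        · intro h; exact hanotC (h ▸ hc)
        · intro h; exact hbnotC (h ▸ hc)
      · intro c hc
        obtain ⟨c₁, hc₁C, hc₁lt⟩ := exists_lt_of_csInf_lt hCne' hc.1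
        obtain ⟨c₂, hc₂C, hc₂gt⟩ := exists_lt_of_lt_csSup hCne' hc.2
        exact hoc.out hc₁C hc₂C ⟨hc₁lt.le, hc₂gt.le⟩
    have hacl : a ∈ closure C := csInf_mem_closure hCne' hbb
    have hbcl : b ∈ closure C := csSup_mem_closure hCne' hba
    have hfr : ∀ y ∈ closure C, y ∉ C → y ∈ frontier U := by
      intro y hycl hynotC
      have hyclU : y ∈ closure U := closure_mono hCsub' hycl
      have hynotU : y ∉ U := by
        intro hyU
        have h1 : y ∈ connectedComponentIn U y := mem_connectedComponentIn hyU
        have h2 : IsOpen (connectedComponentIn U y) := hUo.connectedComponentIn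
        obtain ⟨z, hz1, hz2⟩ := mem_closure_iff.1 hycl _ h2 h1
        have : connectedComponentIn U y = C := by
          rw [connectedComponentIn_eq hz1]
          exact (connectedComponentIn_eq hz2).symm
        exact hynotC (this ▸ h1)
      rw [hUo.frontier_eq]; exact ⟨hyclU, hynotU⟩
    exact ⟨a, b, hfr a hacl hanotC, hfr b hbcl hbnotC, hC_eq⟩
  -- pairwise disjoint and countable
  have hdisj : 𝒞.PairwiseDisjoint id := by
    rintro C hC C' hC' hne
    obtain ⟨x, hxU, rfl⟩ := hC
    obtain ⟨y, hyU, rfl⟩ := hC'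
    refine Set.disjoint_left.2 fun z hz hz' => hne ?_
    simp only [id] at *
    rw [connectedComponentIn_eq hz, connectedComponentIn_eq hz']
  have hcount : 𝒞.Countable := hdisj.countable_of_isOpen hCopen hCne
  haveI := hcount.to_subtype
  have hUeq : U = ⋃ (C : 𝒞), (C : Set ℝ) := by
    apply Subset.antisymm
    · intro x hx
      exact mem_iUnion.2 ⟨⟨connectedComponentIn U x, ⟨x, hx, rfl⟩⟩, mem_connectedComponentIn hx⟩
    · exact iUnion_subset fun C => hCsub C C.2
  have hint : IntegrableOn v' U := by
    have : IntegrableOn v' (closure U) :=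
      hv'.continuousOn.integrableOn_compact hUb.isCompact_closure
    exact this.mono_set subset_closure
  have hmeas : ∀ C : ↥𝒞, MeasurableSet ((C : Set ℝ)) := fun C => (hCopen C C.2).measurableSet
  have hpair : Pairwise (Function.onFun Disjoint fun C : ↥𝒞 => (C : Set ℝ)) := by
    intro C C' hne
    exact hdisj C.2 C'.2 (Subtype.coe_ne_coe.2 hne)
  have hkey := integral_iUnion (μ := volume) (f := v') hmeas hpair (hUeq ▸ hint)
  rw [hUeq, hkey]
  have : ∀ C : 𝒞, ∫ x in (C : Set ℝ), v' x = 0 := by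
    rintro ⟨C, hC⟩
    obtain ⟨a, b, hafr, hbfr, rfl⟩ := hmemC C hC
    simp only
    rcases le_or_gt b a with h | h
    · rw [Set.Ioo_eq_empty (by exact fun hab => absurd h (not_le.2 hab))]
      simp
    · have : ∫ x in Ioo a b, v' x = ∫ x in a..b, v' x := by
        rw [intervalIntegral.integral_of_le h.le, integral_Ioc_eq_integral_Ioo]
      rw [this, intervalIntegral.integral_eq_sub_of_hasDerivAt
          (fun x _ => hv x) (hv'.intervalIntegrable a b), h0 a hafr, h0 b hbfr, sub_zero]
  simp [this]


lemma coord_integral_fderiv_eq_zero {d : ℕ} {Ω : Set (EuclideanSpace ℝ (Fin d))}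
    (hΩo : IsOpen Ω) (hΩb : Bornology.IsBounded Ω)
    {W : EuclideanSpace ℝ (Fin d) → ℝ} (hW : ContDiff ℝ (⊤ : ℕ∞) W)
    (h0 : ∀ x ∈ frontier Ω, W x = 0) (i : Fin d) :
    ∫ x in Ω, fderiv ℝ W x (EuclideanSpace.single i (1:ℝ)) = 0 := by
  classical
  cases d with
  | zero => exact i.elim0
  | succ n =>
  let L : EuclideanSpace ℝ (Fin (n+1)) ≃L[ℝ] (Fin (n+1) → ℝ) := PiLp.continuousLinearEquiv 2 ℝ _
  set Wt : (Fin (n+1) → ℝ) → ℝ := fun p => W (L.symm p) with hWtdef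
  set Ωt : Set (Fin (n+1) → ℝ) := L.symm ⁻¹' Ω with hΩtdef
  set DW : (Fin (n+1) → ℝ) → ℝ := fun p => fderiv ℝ Wt p (Pi.single i 1) with hDWdef
  have hWt : ContDiff ℝ (⊤ : ℕ∞) Wt := hW.comp L.symm.contDiff
  have hΩto : IsOpen Ωt := hΩo.preimage L.symm.continuous
  have hΩtb : Bornology.IsBounded Ωt := by
    have h1 : Ωt ⊆ L '' (closure Ω) := by
      intro p hp
      exact ⟨L.symm p, subset_closure hp, by simp⟩
    exact ((hΩb.isCompact_closure.image L.continuous).isBounded).subset h1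
  have hfr0 : ∀ p ∈ frontier Ωt, Wt p = 0 := by
    intro p hp
    apply h0
    have := (L.symm.toHomeomorph.preimage_frontier Ω) ▸ hp
    exact this
  have hDWc : Continuous DW := by
    have h1 : ContDiff ℝ (⊤ : ℕ∞) (fderiv ℝ Wt) := hWt.fderiv_right (by simp)
    exact h1.continuous.clm_apply continuous_const
  -- transport the derivative
  have hderiv : ∀ x, fderiv ℝ W x (EuclideanSpace.single i (1:ℝ)) = DW (L x) := by
    intro x
    have hA : HasFDerivAt (⇑L) (L : EuclideanSpace ℝ (Fin (n+1)) →L[ℝ] (Fin (n+1) → ℝ)) x :=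
      L.hasFDerivAt
    have hWteq : HasFDerivAt Wt (fderiv ℝ Wt (L x)) (L x) :=
      (hWt.differentiable (by simp) (L x)).hasFDerivAt
    have hcomp : HasFDerivAt (fun y => Wt (L y))
        ((fderiv ℝ Wt (L x)).comp (L : EuclideanSpace ℝ (Fin (n+1)) →L[ℝ] (Fin (n+1) → ℝ))) x :=
      hWteq.comp x hA
    have hfun : (fun y => Wt (L y)) = W := by
      funext y; simp [hWtdef]
    rw [hfun] at hcomp
    rw [hcomp.fderiv]
    have hsingle : L (EuclideanSpace.single i (1:ℝ)) = Pi.single i 1 := rfl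
    simp [hsingle, hDWdef]
  -- rewrite as an indicator integral over P
  have hgi : Integrable (Ωt.indicator DW) := by
    have h1 : IntegrableOn DW (closure Ωt) :=
      hDWc.continuousOn.integrableOn_compact hΩtb.isCompact_closure
    exact (h1.mono_set subset_closure).integrable_indicator hΩto.measurableSet
  have step1 : ∫ x in Ω, fderiv ℝ W x (EuclideanSpace.single i (1:ℝ))
      = ∫ x in Ω, DW (L x) :=
    setIntegral_congr_fun hΩo.measurableSet (fun x _ => hderiv x)
  have step2 : ∫ x in Ω, DW (L x) = ∫ x, Ω.indicator (fun x => DW (L x)) x :=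
    (integral_indicator hΩo.measurableSet).symm
  have step3 : (Ω.indicator (fun x => DW (L x))) = fun x => Ωt.indicator DW (L x) := by
    funext x
    by_cases hx : x ∈ Ω
    · rw [indicator_of_mem hx, indicator_of_mem (by simpa [hΩtdef] using hx)]
    · rw [indicator_of_notMem hx, indicator_of_notMem (by simpa [hΩtdef] using hx)]
  have hL_eq_me : ∀ x, L x = (MeasurableEquiv.toLp 2 (Fin (n+1) → ℝ)).symm x := fun _ => rfl
  have step4 : ∫ x, Ωt.indicator DW (L x) = ∫ p, Ωt.indicator DW p := by
    have := (EuclideanSpace.volume_preserving_symm_measurableEquiv_toLp (Fin (n+1))).integral_comp'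
      (Ωt.indicator DW)
    simp only [hL_eq_me]; exact this
  -- split off coordinate i
  let ψ := MeasurableEquiv.piFinSuccAbove (fun _ : Fin (n+1) => ℝ) i
  have hψ := volume_preserving_piFinSuccAbove (fun _ : Fin (n+1) => ℝ) i
  have step5 : ∫ p, Ωt.indicator DW p = ∫ q : ℝ × (Fin n → ℝ), Ωt.indicator DW (ψ.symm q) :=
    ((MeasurePreserving.symm ψ hψ).integral_comp' (Ωt.indicator DW)).symm
  have hinteg : Integrable (fun q : ℝ × (Fin n → ℝ) => Ωt.indicator DW (ψ.symm q)) :=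
    ((MeasurePreserving.symm ψ hψ).integrable_comp_emb ψ.symm.measurableEmbedding).2 hgi
  have hvol : (volume : Measure (ℝ × (Fin n → ℝ))) = (volume : Measure ℝ).prod volume :=
    (Measure.volume_eq_prod _ _)
  have step6 : ∫ q : ℝ × (Fin n → ℝ), Ωt.indicator DW (ψ.symm q)
      = ∫ z : Fin n → ℝ, ∫ y : ℝ, Ωt.indicator DW (ψ.symm (y, z)) := by
    rw [hvol] at hinteg ⊢
    exact integral_prod_symm _ hinteg
  -- inner integral vanishes for every z
  have step7 : ∀ z : Fin n → ℝ, ∫ y : ℝ, Ωt.indicator DW (ψ.symm (y, z)) = 0 := by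
    intro z
    set c : (Fin (n+1) → ℝ) := i.insertNth 0 z with hc
    set A : ℝ → (Fin (n+1) → ℝ) := fun y => Function.update c i y with hA
    have hψsymm : ∀ y : ℝ, ψ.symm (y, z) = A y := by
      intro y
      funext j
      refine Fin.succAboveCases i ?_ ?_ j
      · simp [ψ, hA, MeasurableEquiv.piFinSuccAbove_symm_apply, Fin.insertNthEquiv, Fin.insertNth_apply_same]
      · intro k
        simp [ψ, hA, MeasurableEquiv.piFinSuccAbove_symm_apply, Fin.insertNthEquiv, Fin.insertNth_apply_succAbove,
          Function.update_of_ne (Fin.succAbove_ne i k), hc]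
    have hAaff : ∀ y : ℝ, A y = c + y • (Pi.single i 1 : Fin (n+1) → ℝ) := by
      intro y
      funext j
      by_cases hj : j = i
      · subst hj
        simp [hA, hc, Pi.add_apply, Pi.smul_apply, Fin.insertNth_apply_same,
          Pi.single_eq_same]
      · simp [hA, Function.update_of_ne hj, Pi.add_apply, Pi.smul_apply,
          Pi.single_eq_of_ne hj]
    have hAcont : Continuous A := by
      have := (continuous_const (y := c)).update i continuous_id
      simpa [hA] using this
    set U : Set ℝ := A ⁻¹' Ωt with hU
    have hUo : IsOpen U := hΩto.preimage hAcont
    have hUb : Bornology.IsBounded U := by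
      obtain ⟨R, hR⟩ := hΩtb.subset_closedBall 0
      apply (Metric.isBounded_closedBall (x := (0:ℝ)) (r := R)).subset
      intro y hy
      have h1 : A y ∈ Metric.closedBall (0 : Fin (n+1) → ℝ) R := hR hy
      simp only [Metric.mem_closedBall, dist_zero_right] at h1 ⊢
      calc ‖y‖ = ‖A y i‖ := by simp [hA]
      _ ≤ ‖A y‖ := norm_le_pi_norm (A y) i
      _ ≤ R := h1
    have hder : ∀ y : ℝ, HasDerivAt (fun y => Wt (A y)) (DW (A y)) y := by
      intro y
      have h1 : HasDerivAt A ((Pi.single i 1 : Fin (n+1) → ℝ)) y := by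
        have h2 : HasDerivAt (fun y : ℝ => c + y • (Pi.single i 1 : Fin (n+1) → ℝ))
            ((1:ℝ) • (Pi.single i 1 : Fin (n+1) → ℝ)) y :=
          (((hasDerivAt_id y).smul_const ((Pi.single i 1 : Fin (n+1) → ℝ)))).const_add c
        rw [one_smul] at h2
        have : A = fun y : ℝ => c + y • (Pi.single i 1 : Fin (n+1) → ℝ) := funext hAaff
        rw [this]
        exact h2
      exact ((hWt.differentiable (by simp) (A y)).hasFDerivAt).comp_hasDerivAt y h1
    have hfr : ∀ y ∈ frontier U, Wt (A y) = 0 := by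
      intro y hy
      exact hfr0 _ (hAcont.frontier_preimage_subset Ωt hy)
    have hindrw : (fun y : ℝ => Ωt.indicator DW (ψ.symm (y, z)))
        = fun y => U.indicator (fun y => DW (A y)) y := by
      funext y
      rw [hψsymm y]
      by_cases hy : y ∈ U
      · rw [indicator_of_mem (show A y ∈ Ωt from hy), indicator_of_mem hy]
      · rw [indicator_of_notMem (show A y ∉ Ωt from hy), indicator_of_notMem hy]
    rw [hindrw, integral_indicator hUo.measurableSet]
    exact oneD_integral_deriv_eq_zero hUo hUb hder (hDWc.comp hAcont) hfr
  rw [step1, step2, step3, step4, step5, step6]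
  simp [step7]


lemma contDiff_fderiv_apply {d : ℕ} {f : EuclideanSpace ℝ (Fin d) → ℝ}
    (hf : ContDiff ℝ (⊤ : ℕ∞) f) (v : EuclideanSpace ℝ (Fin d)) :
    ContDiff ℝ (⊤ : ℕ∞) (fun x => fderiv ℝ f x v) :=
  (hf.fderiv_right (by simp)).clm_apply contDiff_const

lemma green_identity {d : ℕ} {Ω : Set (EuclideanSpace ℝ (Fin d))}
    (hΩo : IsOpen Ω) (hΩb : Bornology.IsBounded Ω)
    {f g : EuclideanSpace ℝ (Fin d) → ℝ}
    (hf : ContDiff ℝ (⊤ : ℕ∞) f) (hg : ContDiff ℝ (⊤ : ℕ∞) g)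
    (hf0 : ∀ x ∈ frontier Ω, f x = 0) (hg0 : ∀ x ∈ frontier Ω, g x = 0) :
    ∫ x in Ω, (g x * lap f x - f x * lap g x) = 0 := by
  classical
  set e : Fin d → EuclideanSpace ℝ (Fin d) := fun i => EuclideanSpace.single i (1:ℝ) with he
  set D : (EuclideanSpace ℝ (Fin d) → ℝ) → Fin d → EuclideanSpace ℝ (Fin d) → ℝ :=
    fun h i x => fderiv ℝ h x (e i) with hD
  set V : Fin d → EuclideanSpace ℝ (Fin d) → ℝ :=
    fun i x => g x * D f i x - f x * D g i x with hV
  have hVsmooth : ∀ i, ContDiff ℝ (⊤ : ℕ∞) (V i) := by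
    intro i
    exact (hg.mul (contDiff_fderiv_apply hf (e i))).sub
      (hf.mul (contDiff_fderiv_apply hg (e i)))
  have hV0 : ∀ i, ∀ x ∈ frontier Ω, V i x = 0 := by
    intro i x hx
    simp [hV, hf0 x hx, hg0 x hx]
  have hcoord : ∀ i, ∫ x in Ω, fderiv ℝ (V i) x (e i) = 0 := fun i =>
    coord_integral_fderiv_eq_zero hΩo hΩb (hVsmooth i) (hV0 i) i
  -- pointwise expansion of the divergence
  have hpt : ∀ x, ∑ i : Fin d, fderiv ℝ (V i) x (e i)
      = g x * lap f x - f x * lap g x := by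
    intro x
    have hterm : ∀ i : Fin d, fderiv ℝ (V i) x (e i)
        = g x * D (D f i) i x - f x * D (D g i) i x := by
      intro i
      have hdf : DifferentiableAt ℝ (fun y => D f i y) x :=
        (contDiff_fderiv_apply hf (e i)).differentiable (by simp) x
      have hdg : DifferentiableAt ℝ (fun y => D g i y) x :=
        (contDiff_fderiv_apply hg (e i)).differentiable (by simp) x
      have hfd : DifferentiableAt ℝ f x := hf.differentiable (by simp) x
      have hgd : DifferentiableAt ℝ g x := hg.differentiable (by simp) x
      have h1 : fderiv ℝ (fun y => g y * D f i y) x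
          = g x • fderiv ℝ (fun y => D f i y) x + D f i x • fderiv ℝ g x :=
        fderiv_mul hgd hdf
      have h2 : fderiv ℝ (fun y => f y * D g i y) x
          = f x • fderiv ℝ (fun y => D g i y) x + D g i x • fderiv ℝ f x :=
        fderiv_mul hfd hdg
      have h3 : fderiv ℝ (V i) x = fderiv ℝ (fun y => g y * D f i y) x
          - fderiv ℝ (fun y => f y * D g i y) x := by
        rw [hV]
        exact fderiv_sub (hgd.mul hdf) (hfd.mul hdg)
      rw [h3, h1, h2]
      simp only [ContinuousLinearMap.sub_apply, ContinuousLinearMap.add_apply,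
        ContinuousLinearMap.smul_apply, smul_eq_mul]
      simp only [hD]
      ring
    rw [Finset.sum_congr rfl (fun i _ => hterm i)]
    rw [Finset.sum_sub_distrib, ← Finset.mul_sum, ← Finset.mul_sum]
    rfl
  have hint : ∀ i, IntegrableOn (fun x => fderiv ℝ (V i) x (e i)) Ω := by
    intro i
    have hc : Continuous (fun x => fderiv ℝ (V i) x (e i)) :=
      (contDiff_fderiv_apply (hVsmooth i) (e i)).continuous
    exact (hc.continuousOn.integrableOn_compact hΩb.isCompact_closure).mono_set
      subset_closure
  have : ∫ x in Ω, (g x * lap f x - f x * lap g x)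
      = ∑ i : Fin d, ∫ x in Ω, fderiv ℝ (V i) x (e i) := by
    rw [← integral_finset_sum _ (fun i _ => hint i)]
    exact setIntegral_congr_fun hΩo.measurableSet (fun x _ => (hpt x).symm)
  rw [this]
  simp [hcoord]

set_option maxHeartbeats 1000000 in
/-- Blow-up for the "cheap Navier--Stokes equation"
`∂ₜ u − ν Δu + (1/2)|∇|(u²) = 0` on a bounded domain `Ω` with Dirichlet boundary
conditions: if `∫ u(·,0) φ₁ = −M` with `M` sufficiently large (depending on `ν`,
`λ₁` and `∫ φ₁`), then no smooth solution can exist for all `t ≥ 0`. Here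
`sqrtLap = (−Δ)^{1/2}`, characterized by being a square root of `−Δ`, self-adjoint,
and having `φ₁` as eigenfunction with eigenvalue `√λ₁`. -/
theorem cheap_navier_stokes_blowup
    (Ω : Set (EuclideanSpace ℝ (Fin d)))
    (hΩopen : IsOpen Ω) (hΩbdd : Bornology.IsBounded Ω) (hΩne : Ω.Nonempty)
    (ν lam₁ M : ℝ) (hν : 0 < ν) (hlam : 0 < lam₁)
    (sqrtLap : (EuclideanSpace ℝ (Fin d) → ℝ) → (EuclideanSpace ℝ (Fin d) → ℝ))
    (hsq : ∀ f, ContDiff ℝ (⊤ : ℕ∞) f → ∀ x ∈ Ω, sqrtLap (sqrtLap f) x = -(lap f x))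
    (hself : ∀ f g, ContDiff ℝ (⊤ : ℕ∞) f → ContDiff ℝ (⊤ : ℕ∞) g →
      ∫ x in Ω, sqrtLap f x * g x = ∫ x in Ω, f x * sqrtLap g x)
    (φ₁ : EuclideanSpace ℝ (Fin d) → ℝ) (hφsmooth : ContDiff ℝ (⊤ : ℕ∞) φ₁)
    (hφpos : ∀ x ∈ Ω, 0 ≤ φ₁ x)
    (hφbc : ∀ x ∈ frontier Ω, φ₁ x = 0)
    (hφeig : ∀ x ∈ Ω, -(lap φ₁ x) = lam₁ * φ₁ x)
    (hφsqrt : ∀ x ∈ Ω, sqrtLap φ₁ x = Real.sqrt lam₁ * φ₁ x)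
    (u : ℝ → EuclideanSpace ℝ (Fin d) → ℝ)
    (husmooth : ContDiff ℝ (⊤ : ℕ∞) (fun p : ℝ × EuclideanSpace ℝ (Fin d) => u p.1 p.2))
    (hubc : ∀ t ≥ (0:ℝ), ∀ x ∈ frontier Ω, u t x = 0)
    (hPDE : ∀ t ≥ (0:ℝ), ∀ x ∈ Ω,
      deriv (fun s => u s x) t - ν * lap (u t) x
        + (1/2) * sqrtLap (fun y => (u t y) ^ 2) x = 0)
    (hM : M > 2 * ν * Real.sqrt lam₁ * ∫ x in Ω, φ₁ x)
    (hinit : ∫ x in Ω, u 0 x * φ₁ x = -M) :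
    False := by
  classical
  set c : ℝ := ∫ x in Ω, φ₁ x with hc
  have hΩmeas : MeasurableSet Ω := hΩopen.measurableSet
  have hK : IsCompact (closure Ω) := hΩbdd.isCompact_closure
  -- integrability of continuous functions on Ω
  have hIntCont : ∀ h : EuclideanSpace ℝ (Fin d) → ℝ, Continuous h →
      IntegrableOn h Ω volume := fun h hh =>
    (hh.continuousOn.integrableOn_compact hK).mono_set subset_closure
  -- smoothness of time slices
  have hu_t : ∀ t : ℝ, ContDiff ℝ (⊤ : ℕ∞) (u t) := by
    intro t
    exact husmooth.comp (ContDiff.prodMk contDiff_const contDiff_id)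
  -- the time derivative
  set U : ℝ × EuclideanSpace ℝ (Fin d) → ℝ := fun p => u p.1 p.2 with hUdef
  set P : ℝ → EuclideanSpace ℝ (Fin d) → ℝ :=
    fun t x => fderiv ℝ U (t, x) (1, 0) with hPdef
  have hderiv_eq : ∀ t x, HasDerivAt (fun s => u s x) (P t x) t := by
    intro t x
    have h1 : HasFDerivAt U (fderiv ℝ U (t, x)) (t, x) :=
      (husmooth.differentiable (by simp) _).hasFDerivAt
    have h2 : HasDerivAt (fun s : ℝ => (s, x)) ((1 : ℝ), (0 : EuclideanSpace ℝ (Fin d))) t :=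
      (hasDerivAt_id t).prodMk (hasDerivAt_const t x)
    exact h1.comp_hasDerivAt t h2
  have hPcont : Continuous (fun p : ℝ × EuclideanSpace ℝ (Fin d) => P p.1 p.2) := by
    have h1 : ContDiff ℝ (⊤ : ℕ∞) (fderiv ℝ U) := husmooth.fderiv_right (by simp)
    exact h1.continuous.clm_apply continuous_const
  have hPcont_t : ∀ t, Continuous (P t) := by
    intro t
    exact hPcont.comp (Continuous.prodMk_right t)
  -- F and Q
  set F : ℝ → ℝ := fun t => ∫ x in Ω, u t x * φ₁ x with hF
  set Q : ℝ → ℝ := fun t => ∫ x in Ω, (u t x) ^ 2 * φ₁ x with hQ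
  set D : ℝ → ℝ := fun t => ∫ x in Ω, P t x * φ₁ x with hD
  have hφcont : Continuous φ₁ := hφsmooth.continuous
  have hucont : ∀ t, Continuous (u t) := fun t => (hu_t t).continuous
  -- F has derivative D
  have hFderiv : ∀ t₀ : ℝ, HasDerivAt F (D t₀) t₀ := by
    intro t₀
    have hcompact : IsCompact ((Metric.closedBall t₀ 1) ×ˢ closure Ω) :=
      (isCompact_closedBall t₀ 1).prod hK
    have hcontPφ : Continuous (fun p : ℝ × EuclideanSpace ℝ (Fin d) => P p.1 p.2 * φ₁ p.2) :=
      hPcont.mul (hφcont.comp continuous_snd)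
    obtain ⟨C, hC⟩ := hcompact.exists_bound_of_continuousOn hcontPφ.continuousOn
    have key := hasDerivAt_integral_of_dominated_loc_of_deriv_le
      (μ := volume.restrict Ω)
      (F := fun t x => u t x * φ₁ x)
      (F' := fun t x => P t x * φ₁ x)
      (bound := fun _ => C)
      (x₀ := t₀) (s := Metric.ball t₀ 1) (Metric.ball_mem_nhds t₀ one_pos)
      (Eventually.of_forall fun t =>
        ((hucont t).mul hφcont).aestronglyMeasurable)
      (hIntCont _ ((hucont t₀).mul hφcont))
      ((hPcont_t t₀).mul hφcont).aestronglyMeasurable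
      (ae_restrict_of_forall_mem hΩmeas fun x hx => ?_)
      (integrableOn_const hΩbdd.measure_lt_top.ne)
      (ae_restrict_of_forall_mem hΩmeas fun x hx => ?_)
    · exact key.2
    · intro t ht
      exact hC (t, x) ⟨Metric.ball_subset_closedBall ht, subset_closure hx⟩
    · intro t ht
      exact (hderiv_eq t x).mul_const (φ₁ x)
  have hFcont : Continuous F :=
    continuous_iff_continuousAt.2 fun t => (hFderiv t).continuousAt
  have hF0 : F 0 = -M := hinit
  -- the key integral identity
  have hDval : ∀ t, 0 ≤ t → D t = -(ν * lam₁) * F t - (Real.sqrt lam₁ / 2) * Q t := by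
    intro t ht
    have hw := hu_t t
    have hw2 : ContDiff ℝ (⊤ : ℕ∞) (fun y => (u t y) ^ 2) := hw.pow 2
    -- the PDE pointwise
    have hPDEt : ∀ x ∈ Ω, P t x
        = ν * lap (u t) x - (1/2) * sqrtLap (fun y => (u t y) ^ 2) x := by
      intro x hx
      have h1 := hPDE t ht x hx
      have h2 : deriv (fun s => u s x) t = P t x := (hderiv_eq t x).deriv
      rw [h2] at h1
      linarith
    -- integrability of the nonlinear term on Ω
    have hNLcont : IntegrableOn (fun x => sqrtLap (fun y => (u t y) ^ 2) x * φ₁ x) Ω volume := by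
      apply IntegrableOn.congr_fun (f := fun x =>
        (2 * (ν * lap (u t) x - P t x)) * φ₁ x)
      · apply hIntCont
        apply Continuous.mul _ hφcont
        apply Continuous.mul continuous_const
        apply Continuous.sub
        · apply Continuous.mul continuous_const
          have : Continuous (lap (u t)) := by
            apply continuous_finset_sum
            intro i _
            exact (contDiff_fderiv_apply (contDiff_fderiv_apply hw _) _).continuous
          exact this
        · exact hPcont_t t
      · intro x hx
        have := hPDEt x hx
        have hval : sqrtLap (fun y => (u t y) ^ 2) x
            = 2 * (ν * lap (u t) x - P t x) := by linarith
        simp only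
        rw [← hval]
      · exact hΩmeas
    have hlapcont : Continuous (lap (u t)) := by
      apply continuous_finset_sum
      intro i _
      exact (contDiff_fderiv_apply (contDiff_fderiv_apply hw _) _).continuous
    have hlapφcont : Continuous (lap φ₁) := by
      apply continuous_finset_sum
      intro i _
      exact (contDiff_fderiv_apply (contDiff_fderiv_apply hφsmooth _) _).continuous
    -- split the integral
    have hsplit : D t = ν * (∫ x in Ω, lap (u t) x * φ₁ x)
        - (1/2) * (∫ x in Ω, sqrtLap (fun y => (u t y) ^ 2) x * φ₁ x) := by
      have h1 : D t = ∫ x in Ω,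
          (ν * (lap (u t) x * φ₁ x) - (1/2) * (sqrtLap (fun y => (u t y) ^ 2) x * φ₁ x)) := by
        apply setIntegral_congr_fun hΩmeas
        intro x hx
        have := hPDEt x hx
        simp only
        rw [this]
        ring
      rw [h1, integral_sub, integral_const_mul, integral_const_mul]
      · exact (hIntCont _ (hlapcont.mul hφcont)).const_mul ν
      · exact hNLcont.const_mul (1/2)
    -- Green's identity for the viscosity term
    have hGreen : ∫ x in Ω, lap (u t) x * φ₁ x = -lam₁ * F t := by
      have hg0 := green_identity hΩopen hΩbdd hw hφsmooth (hubc t ht) hφbc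
      have h2 : ∫ x in Ω, (φ₁ x * lap (u t) x) = ∫ x in Ω, (u t x * lap φ₁ x) := by
        have h3 := integral_sub (f := fun x => φ₁ x * lap (u t) x) (g := fun x => u t x * lap φ₁ x) (hIntCont _ (hφcont.mul hlapcont))
          (hIntCont _ ((hucont t).mul hlapφcont))
        rw [← sub_eq_zero]
        rw [← h3]
        exact hg0
      have h4 : ∫ x in Ω, lap (u t) x * φ₁ x = ∫ x in Ω, φ₁ x * lap (u t) x := by
        apply setIntegral_congr_fun hΩmeas
        intro x _
        ring
      have h5 : ∫ x in Ω, (u t x * lap φ₁ x) = ∫ x in Ω, -lam₁ * (u t x * φ₁ x) := by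
        apply setIntegral_congr_fun hΩmeas
        intro x hx
        have := hφeig x hx
        have hval : lap φ₁ x = -(lam₁ * φ₁ x) := by linarith
        simp only
        rw [hval]
        ring
      rw [h4, h2, h5, integral_const_mul]
    -- the nonlinear term
    have hNL : ∫ x in Ω, sqrtLap (fun y => (u t y) ^ 2) x * φ₁ x
        = Real.sqrt lam₁ * Q t := by
      rw [hself _ _ hw2 hφsmooth]
      have h1 : ∫ x in Ω, (u t x) ^ 2 * sqrtLap φ₁ x
          = ∫ x in Ω, Real.sqrt lam₁ * ((u t x) ^ 2 * φ₁ x) := by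
        apply setIntegral_congr_fun hΩmeas
        intro x hx
        simp only
        rw [hφsqrt x hx]
        ring
      rw [h1, integral_const_mul]
    rw [hsplit, hGreen, hNL]
    ring
  -- basic facts about c
  have hc0 : 0 ≤ c := setIntegral_nonneg hΩmeas hφpos
  have hMpos : 0 < M := by
    have : 0 ≤ 2 * ν * Real.sqrt lam₁ * c :=
      mul_nonneg (mul_nonneg (by linarith) (Real.sqrt_nonneg _)) hc0
    linarith
  -- Cauchy-Schwarz
  have hCS : ∀ t, (F t) ^ 2 ≤ Q t * c := by
    intro t
    have hquad : ∀ r : ℝ, 0 ≤ c * (r * r) + (2 * F t) * r + Q t := by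
      intro r
      have hexp : ∫ x in Ω, (u t x + r) ^ 2 * φ₁ x
          = c * (r * r) + (2 * F t) * r + Q t := by
        have h1 : ∫ x in Ω, (u t x + r) ^ 2 * φ₁ x
            = ∫ x in Ω, ((u t x) ^ 2 * φ₁ x + (2 * r) * (u t x * φ₁ x) + (r * r) * φ₁ x) := by
          apply setIntegral_congr_fun hΩmeas
          intro x _
          ring
        rw [h1, integral_add, integral_add, integral_const_mul, integral_const_mul]
        · ring
        · exact hIntCont _ (((hucont t).pow 2).mul hφcont)
        · exact (hIntCont _ ((hucont t).mul hφcont)).const_mul _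
        · exact ((hIntCont _ (((hucont t).pow 2).mul hφcont)).add
            ((hIntCont _ ((hucont t).mul hφcont)).const_mul _))
        · exact (hIntCont _ hφcont).const_mul _
      have hnn : 0 ≤ ∫ x in Ω, (u t x + r) ^ 2 * φ₁ x :=
        setIntegral_nonneg hΩmeas fun x hx => mul_nonneg (sq_nonneg _) (hφpos x hx)
      linarith [hexp ▸ hnn]
    have hdisc := discrim_le_zero hquad
    rw [discrim] at hdisc
    nlinarith [hdisc]
  -- c is positive
  have hcpos : 0 < c := by
    rcases hc0.lt_or_eq with h | h
    · exact h
    · exfalso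
      have := hCS 0
      rw [hF0, ← h] at this
      nlinarith
  have hsqrtpos : 0 < Real.sqrt lam₁ := Real.sqrt_pos.2 hlam
  have hss : Real.sqrt lam₁ * Real.sqrt lam₁ = lam₁ := Real.mul_self_sqrt hlam.le
  obtain ⟨k, hk⟩ : ∃ k : ℝ, k = Real.sqrt lam₁ / (2 * c) := ⟨_, rfl⟩
  have hkpos : 0 < k := by rw [hk]; exact div_pos hsqrtpos (by linarith)
  have hkM : ν * lam₁ < k * M := by
    have h2 : k * M = Real.sqrt lam₁ * M / (2 * c) := by rw [hk]; ring
    rw [h2, lt_div_iff₀ (by linarith : (0:ℝ) < 2 * c)]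
    nlinarith [hss, hsqrtpos, hM, hcpos, hν]
  -- differential inequality: D t ≤ -ν lam₁ F t - k F t ^ 2 for t ≥ 0
  have hDle : ∀ t, 0 ≤ t → D t ≤ -(ν * lam₁) * F t - k * (F t) ^ 2 := by
    intro t ht
    rw [hDval t ht]
    have h1 : (F t) ^ 2 / c ≤ Q t := (div_le_iff₀ hcpos).2 (hCS t)
    have h2 : k * (F t) ^ 2 ≤ (Real.sqrt lam₁ / 2) * Q t := by
      have h3 : k * (F t) ^ 2 = (Real.sqrt lam₁ / 2) * ((F t) ^ 2 / c) := by
        rw [hk]; field_simp; try ring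
      rw [h3]
      apply mul_le_mul_of_nonneg_left h1 (by positivity)
    linarith
  -- Stage 1: F stays below -M
  have hbar : ∀ t, 0 ≤ t → F t ≤ -M := by
    by_contra hcon
    push_neg at hcon
    obtain ⟨t₁, ht₁0, ht₁⟩ := hcon
    set A : Set ℝ := Icc 0 t₁ ∩ F ⁻¹' (Iic (-M)) with hA
    have hAclosed : IsClosed A := isClosed_Icc.inter (isClosed_Iic.preimage hFcont)
    have h0A : (0:ℝ) ∈ A := ⟨⟨le_refl 0, ht₁0⟩, by simp [hF0]⟩
    have hAbdd : BddAbove A := (Bornology.IsBounded.subset (Metric.isBounded_Icc 0 t₁)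
      (inter_subset_left)).bddAbove
    set T := sSup A with hT
    have hTA : T ∈ A := hAclosed.csSup_mem ⟨0, h0A⟩ hAbdd
    have hT0 : 0 ≤ T := hTA.1.1
    have hTt₁ : T < t₁ := by
      rcases hTA.1.2.lt_or_eq with h | h
      · exact h
      · exfalso; have := hTA.2; rw [h] at this; simp at this; linarith
    have hTub : ∀ s, T < s → s ≤ t₁ → -M < F s := by
      intro s hs hst₁
      by_contra hFs
      push_neg at hFs
      have hsA : s ∈ A := ⟨⟨by linarith, hst₁⟩, hFs⟩
      exact absurd (le_csSup hAbdd hsA) (not_le.2 hs)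
    have hFT : F T = -M := by
      have hle : F T ≤ -M := hTA.2
      have hge : -M ≤ F T := by
        have htd : Tendsto F (𝓝[>] T) (𝓝 (F T)) :=
          (hFcont.tendsto T).mono_left nhdsWithin_le_nhds
        refine ge_of_tendsto htd ?_
        filter_upwards [Ioc_mem_nhdsGT_of_mem ⟨le_refl T, hTt₁⟩] with s hs
        exact (hTub s hs.1 hs.2).le
      linarith
    -- derivative at T is negative
    have hDT : D T < 0 := by
      have h1 := hDle T hT0
      rw [hFT] at h1
      have h2 : (F T)^2 = M^2 := by rw [hFT]; ring
      -- D T ≤ ν lam₁ M - k M^2 < 0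
      have h3 : D T ≤ ν * lam₁ * M - k * M ^ 2 := by
        calc D T ≤ -(ν * lam₁) * (-M) - k * (-M) ^ 2 := h1
        _ = ν * lam₁ * M - k * M ^ 2 := by ring
      nlinarith [hkM, hMpos]
    have hder := hFderiv T
    have hslope := hasDerivAt_iff_tendsto_slope.1 hder
    have hev : ∀ᶠ s in 𝓝[≠] T, slope F T s < 0 :=
      hslope.eventually (gt_mem_nhds hDT)
    have hev' : ∀ᶠ s in 𝓝[>] T, slope F T s < 0 :=
      hev.filter_mono (nhdsWithin_mono T fun s hs => ne_of_gt hs)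
    have hev2 : ∀ᶠ s in 𝓝[>] T, s ∈ Ioc T t₁ :=
      Ioc_mem_nhdsGT_of_mem ⟨le_refl T, hTt₁⟩
    obtain ⟨s, hs1, hs2⟩ := (hev'.and hev2).exists
    have hFs : F s < F T := by
      have hslopeval : slope F T s = (F s - F T) / (s - T) := slope_def_field F T s
      rw [hslopeval] at hs1
      have hsT : 0 < s - T := by linarith [hs2.1]
      by_contra hcontra
      push_neg at hcontra
      have h9 : 0 ≤ (F s - F T) / (s - T) := div_nonneg (by linarith) hsT.le
      linarith
    rw [hFT] at hFs
    exact absurd (hTub s hs2.1 hs2.2) (not_lt.2 hFs.le)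
  -- Stage 2: blow-up via the reciprocal
  have hFneg : ∀ t, 0 ≤ t → F t < 0 := fun t ht => lt_of_le_of_lt (hbar t ht) (by linarith)
  obtain ⟨k₂, hk₂⟩ : ∃ k₂ : ℝ, k₂ = k - ν * lam₁ / M := ⟨_, rfl⟩
  have hk₂pos : 0 < k₂ := by
    rw [hk₂, sub_pos, div_lt_iff₀ hMpos]
    linarith [hkM]
  set H : ℝ → ℝ := fun t => (F t)⁻¹ with hH
  have hHd : ∀ t, 0 ≤ t → HasDerivAt H (-(D t) / (F t) ^ 2) t := by
    intro t ht
    exact (hFderiv t).inv (ne_of_lt (hFneg t ht))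
  have hH'ge : ∀ t, 0 ≤ t → k₂ ≤ -(D t) / (F t) ^ 2 := by
    intro t ht
    have hFt := hbar t ht
    have hF2 : 0 < (F t) ^ 2 := by nlinarith [hFneg t ht]
    rw [le_div_iff₀ hF2]
    have h1 := hDle t ht
    -- need : k₂ * F t ^2 ≤ -(D t), knowing -(D t) ≥ ν lam₁ F t + k F t ^2
    have h2 : 0 ≤ ν * lam₁ * (F t * (F t + M)) := by
      have ha : F t ≤ 0 := (hFneg t ht).le
      have hb : F t + M ≤ 0 := by linarith
      exact mul_nonneg (by positivity) (mul_nonneg_iff.2 (Or.inr ⟨ha, hb⟩))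
    have h3 : k₂ * F t ^ 2 = k * F t ^ 2 - ν * lam₁ / M * F t ^ 2 := by rw [hk₂]; ring
    have h5 : 0 ≤ ν * lam₁ * F t + ν * lam₁ / M * F t ^ 2 := by
      have h6 : (ν * lam₁ * F t + ν * lam₁ / M * F t ^ 2) * M
          = ν * lam₁ * (F t * (F t + M)) := by field_simp; ring
      have h7 : 0 ≤ (ν * lam₁ * F t + ν * lam₁ / M * F t ^ 2) * M := by rw [h6]; exact h2
      by_contra hneg
      push_neg at hneg
      nlinarith [h7, hMpos, hneg]
    linarith [h1, h3, h5]
  -- G := H - k₂ t is monotone on [0,∞)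
  set G : ℝ → ℝ := fun t => H t - k₂ * t with hG
  have hGd : ∀ t, 0 ≤ t → HasDerivAt G (-(D t) / (F t) ^ 2 - k₂) t := by
    intro t ht
    have h2 : HasDerivAt (fun s : ℝ => k₂ * s) k₂ t := by
      simpa using (hasDerivAt_id t).const_mul k₂
    exact (hHd t ht).sub h2
  have hGmono : MonotoneOn G (Ici (0:ℝ)) := by
    apply monotoneOn_of_deriv_nonneg (convex_Ici 0)
    · apply ContinuousOn.sub
      · intro t ht
        exact ((hHd t ht).continuousAt).continuousWithinAt
      · exact (continuous_const.mul continuous_id).continuousOn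
    · intro t ht
      rw [interior_Ici] at ht
      exact ((hGd t (le_of_lt ht)).differentiableAt).differentiableWithinAt
    · intro t ht
      rw [interior_Ici] at ht
      rw [(hGd t (le_of_lt ht)).deriv]
      have := hH'ge t (le_of_lt ht)
      linarith
  set t₂ : ℝ := (M⁻¹ + 1) / k₂ with ht₂
  have ht₂pos : 0 < t₂ := div_pos (by positivity) hk₂pos
  have hmono := hGmono (self_mem_Ici) (mem_Ici.2 ht₂pos.le) ht₂pos.le
  have hG0 : G 0 = -M⁻¹ := by
    simp only [hG, hH, hF0]
    simp [hF0, inv_neg]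
  have hHt₂ : H t₂ = G t₂ + k₂ * t₂ := by simp only [hG]; ring
  have hk₂t₂ : k₂ * t₂ = M⁻¹ + 1 := by
    rw [ht₂]
    field_simp
  have hHge : 1 ≤ H t₂ := by
    have : G 0 ≤ G t₂ := hmono
    rw [hG0] at this
    rw [hHt₂, hk₂t₂]
    linarith
  have hHneg : H t₂ < 0 := by
    rw [hH]
    simp only
    exact inv_lt_zero.2 (hFneg t₂ ht₂pos.le)
  linarith


end
end

section
/- There is no continuous function φ : ℝ → ℝ such that for every smooth solution u of the 3d incompressible Euler equations on the periodic box (ℝ/ℤ)³ and every t ≥ 0 one has ‖u(·,t)‖_{W^{1,p}(Ω)} ≤ φ(‖u(·,0)‖_{W^{1,p}(Ω)}), for any fixed 1 < p < ∞. -/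
open Set MeasureTheory

noncomputable section

/-- Partial derivative in direction `j` of a scalar function on `ℝ³`. -/
def pd (j : Fin 3) (f : (Fin 3 → ℝ) → ℝ) (x : Fin 3 → ℝ) : ℝ :=
  fderiv ℝ f x (Pi.single j 1)

/-- `p`-th power of the `W^{1,p}` norm over the unit periodic box. -/
def W1pP (p : ℝ) (v : (Fin 3 → ℝ) → (Fin 3 → ℝ)) : ℝ :=
  (∑ i : Fin 3, ∫ x in Set.Icc (0 : Fin 3 → ℝ) 1, |v x i| ^ p) +
  ∑ i : Fin 3, ∑ j : Fin 3,
    ∫ x in Set.Icc (0 : Fin 3 → ℝ) 1, |pd j (fun y => v y i) x| ^ p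

/-- The `W^{1,p}` norm over the unit periodic box. -/
def W1p (p : ℝ) (v : (Fin 3 → ℝ) → (Fin 3 → ℝ)) : ℝ := (W1pP p v) ^ (1/p)

/-! ### The shear-flow counterexample -/

def FF (y : ℝ) : ℝ := Real.sin (2 * Real.pi * y)
def GG (y : ℝ) : ℝ := 2 * Real.pi * Real.cos (2 * Real.pi * y)

lemma hFF (y : ℝ) : HasDerivAt FF (GG y) y := by
  unfold FF GG
  have h : HasDerivAt (fun z : ℝ => 2 * Real.pi * z) (2 * Real.pi) y := by
    simpa using (hasDerivAt_id y).const_mul (2 * Real.pi)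
  simpa [Function.comp_def, mul_comm] using (Real.hasDerivAt_sin (2 * Real.pi * y)).comp y h

lemma FFper (y : ℝ) (k : ℤ) : FF (y + k) = FF y := by
  unfold FF
  rw [show 2 * Real.pi * (y + (k:ℝ)) = 2 * Real.pi * y + k * (2 * Real.pi) by ring,
    Real.sin_add_int_mul_two_pi]

lemma FFcont : Continuous FF := (Real.continuous_sin.comp (continuous_const.mul continuous_id))
lemma GGcont : Continuous GG := (continuous_const.mul (Real.continuous_cos.comp (continuous_const.mul continuous_id)))

lemma GGper : Function.Periodic GG 1 := by
  intro y
  have := Real.cos_add_int_mul_two_pi (2 * Real.pi * y) 1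
  simp only [GG]
  rw [mul_add, mul_one]
  simpa [mul_comm, mul_left_comm, mul_assoc] using congrArg (2 * Real.pi * ·) this

def myu (t : ℝ) (x : Fin 3 → ℝ) : Fin 3 → ℝ :=
  ![FF (x 1), 0, FF (x 0 - t * FF (x 1))]

lemma myu0 (t : ℝ) : (fun y => myu t y 0) = fun y => FF (y 1) := by
  funext y; simp [myu]
lemma myu1 (t : ℝ) : (fun y => myu t y 1) = fun _ => (0:ℝ) := by
  funext y; simp [myu]
lemma myu2 (t : ℝ) : (fun y => myu t y 2) = fun y => FF (y 0 - t * FF (y 1)) := by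
  funext y; simp [myu]

def P (j : Fin 3) : (Fin 3 → ℝ) →L[ℝ] ℝ := ContinuousLinearMap.proj j

lemma hasF0 (t : ℝ) (x : Fin 3 → ℝ) :
    HasFDerivAt (fun y => myu t y 0) (GG (x 1) • P 1) x := by
  rw [myu0]
  have := (hFF (x 1)).comp_hasFDerivAt x ((P 1).hasFDerivAt); exact this

lemma hasF2 (t : ℝ) (x : Fin 3 → ℝ) :
    HasFDerivAt (fun y => myu t y 2)
      (GG (x 0 - t * FF (x 1)) • (P 0 - (t * GG (x 1)) • P 1)) x := by
  rw [myu2]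
  have hin : HasFDerivAt (fun y : Fin 3 → ℝ => y 0 - t * FF (y 1))
      (P 0 - (t * GG (x 1)) • P 1) x := by
    have h1 : HasFDerivAt (fun y : Fin 3 → ℝ => y 0) (P 0) x := (P 0).hasFDerivAt
    have h2 : HasFDerivAt (fun y : Fin 3 → ℝ => t * FF (y 1))
        ((t * GG (x 1)) • P 1) x := by
      have := ((hFF (x 1)).comp_hasFDerivAt x ((P 1).hasFDerivAt)).const_mul t
      rw [mul_smul]
      exact this
    exact h1.sub h2
  exact (hFF _).comp_hasFDerivAt x hin

lemma pd_eq {f : (Fin 3 → ℝ) → ℝ} {L : (Fin 3 → ℝ) →L[ℝ] ℝ} {x : Fin 3 → ℝ}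
    (h : HasFDerivAt f L x) (j : Fin 3) : pd j f x = L (Pi.single j 1) := by
  rw [pd, h.fderiv]

lemma P_single (i j : Fin 3) : P i (Pi.single j (1:ℝ)) = if i = j then 1 else 0 := by
  simp [P, Pi.single_apply]

lemma pd_myu0 (t : ℝ) (x : Fin 3 → ℝ) (j : Fin 3) :
    pd j (fun y => myu t y 0) x = if j = 1 then GG (x 1) else 0 := by
  rw [pd_eq (hasF0 t x) j]
  simp [P_single]
  rcases eq_or_ne j 1 with h | h <;> simp [h, eq_comm]

lemma pd_myu1 (t : ℝ) (x : Fin 3 → ℝ) (j : Fin 3) :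
    pd j (fun y => myu t y 1) x = 0 := by
  rw [myu1, pd, fderiv_fun_const]
  simp

lemma pd_myu2 (t : ℝ) (x : Fin 3 → ℝ) (j : Fin 3) :
    pd j (fun y => myu t y 2) x =
      GG (x 0 - t * FF (x 1)) *
        (if j = 0 then 1 else if j = 1 then -(t * GG (x 1)) else 0) := by
  rw [pd_eq (hasF2 t x) j]
  fin_cases j <;> simp [P_single]

lemma pd_zero_fn (i : Fin 3) (x : Fin 3 → ℝ) : pd i (fun _ => (0:ℝ)) x = 0 := by
  rw [pd, fderiv_fun_const]; simp

lemma FFsmooth : ContDiff ℝ (⊤ : ℕ∞) FF :=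
  Real.contDiff_sin.comp (contDiff_const.mul contDiff_id)

lemma myu_smooth : ContDiff ℝ (⊤ : ℕ∞) (fun q : ℝ × (Fin 3 → ℝ) => myu q.1 q.2) := by
  rw [contDiff_pi]
  intro i
  have h0 : ContDiff ℝ (⊤ : ℕ∞) (fun q : ℝ × (Fin 3 → ℝ) => q.2 0) :=
    (ContinuousLinearMap.proj (R := ℝ) (φ := fun _ : Fin 3 => ℝ) 0).contDiff.comp contDiff_snd
  have h1 : ContDiff ℝ (⊤ : ℕ∞) (fun q : ℝ × (Fin 3 → ℝ) => q.2 1) :=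
    (ContinuousLinearMap.proj (R := ℝ) (φ := fun _ : Fin 3 => ℝ) 1).contDiff.comp contDiff_snd
  fin_cases i
  · exact FFsmooth.comp h1
  · exact contDiff_const
  · exact FFsmooth.comp (h0.sub (contDiff_fst.mul (FFsmooth.comp h1)))

lemma myu_periodic (t : ℝ) (x : Fin 3 → ℝ) (k : Fin 3 → ℤ) :
    myu t (x + fun j => (k j : ℝ)) = myu t x := by
  funext i
  fin_cases i <;> simp [myu, Pi.add_apply, FFper]
  · rw [show x 0 + (k 0 : ℝ) - t * FF (x 1) = (x 0 - t * FF (x 1)) + (k 0 : ℝ) by ring, FFper]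

lemma myu_div (t : ℝ) (x : Fin 3 → ℝ) :
    ∑ i : Fin 3, pd i (fun y => myu t y i) x = 0 := by
  rw [Fin.sum_univ_three, pd_myu0, pd_myu1, pd_myu2]
  norm_num [show (2:Fin 3) ≠ 0 by decide, show (2:Fin 3) ≠ 1 by decide,
    show (0:Fin 3) ≠ 1 by decide]

lemma euler0 (t : ℝ) (x : Fin 3 → ℝ) :
    deriv (fun s => myu s x 0) t
      + (∑ j : Fin 3, myu t x j * pd j (fun y => myu t y 0) x)
      + pd 0 (fun _ => (0:ℝ)) x = 0 := by
  rw [pd_zero_fn, Fin.sum_univ_three]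
  simp only [pd_myu0]
  have : (fun s : ℝ => myu s x 0) = fun _ => FF (x 1) := by funext s; simp [myu]
  rw [this, deriv_const]
  simp [myu]

lemma euler1 (t : ℝ) (x : Fin 3 → ℝ) :
    deriv (fun s => myu s x 1) t
      + (∑ j : Fin 3, myu t x j * pd j (fun y => myu t y 1) x)
      + pd 1 (fun _ => (0:ℝ)) x = 0 := by
  rw [pd_zero_fn, Fin.sum_univ_three]
  simp only [pd_myu1]
  have : (fun s : ℝ => myu s x 1) = fun _ => (0:ℝ) := by funext s; simp [myu]
  rw [this, deriv_const]
  simp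

lemma euler2 (t : ℝ) (x : Fin 3 → ℝ) :
    deriv (fun s => myu s x 2) t
      + (∑ j : Fin 3, myu t x j * pd j (fun y => myu t y 2) x)
      + pd 2 (fun _ => (0:ℝ)) x = 0 := by
  rw [pd_zero_fn, Fin.sum_univ_three]
  simp only [pd_myu2]
  have hd : HasDerivAt (fun s : ℝ => myu s x 2)
      (-(FF (x 1)) * GG (x 0 - t * FF (x 1))) t := by
    have : (fun s : ℝ => myu s x 2) = fun s => FF (x 0 - s * FF (x 1)) := by
      funext s; simp [myu]
    rw [this]
    have hin : HasDerivAt (fun s : ℝ => x 0 - s * FF (x 1)) (-(FF (x 1))) t := by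
      simpa using ((hasDerivAt_id t).mul_const (FF (x 1))).const_sub (x 0)
    simpa [mul_comm, Function.comp_def] using (hFF (x 0 - t * FF (x 1))).comp t hin
  rw [hd.deriv]
  simp [myu]

lemma myu_euler (t : ℝ) (x : Fin 3 → ℝ) (i : Fin 3) :
    deriv (fun s => myu s x i) t
      + (∑ j : Fin 3, myu t x j * pd j (fun y => myu t y i) x)
      + pd i (fun _ => (0:ℝ)) x = 0 := by
  fin_cases i
  · exact euler0 t x
  · exact euler1 t x
  · exact euler2 t x

/-! ### Integration over the box -/

lemma preim2 : (MeasurableEquiv.piFinSuccAbove (fun _ : Fin 2 => ℝ) 0) ⁻¹'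
    (Icc (0:ℝ) 1 ×ˢ Icc (0:Fin 1 → ℝ) 1) = Icc (0:Fin 2 → ℝ) 1 := by
  ext x
  simp only [MeasurableEquiv.piFinSuccAbove_apply, mem_preimage, mem_prod, mem_Icc,
    Pi.le_def, Fin.removeNth]
  constructor
  · rintro ⟨⟨h1, h2⟩, h3, h4⟩
    constructor <;> intro i <;> fin_cases i
    · exact h1
    · exact h3 0
    · exact h2
    · exact h4 0
  · rintro ⟨h1, h2⟩
    exact ⟨⟨h1 0, h2 0⟩, fun j => by exact h1 (Fin.succAbove 0 j),
      fun j => by exact h2 (Fin.succAbove 0 j)⟩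

lemma box2 (g : ℝ → ℝ) : ∫ y in Icc (0:Fin 2 → ℝ) 1, g (y 0) =
    ∫ a in Icc (0:ℝ) 1, g a := by
  have hmp := (volume_preserving_piFinSuccAbove (fun _ : Fin 2 => ℝ) 0)
  have := hmp.setIntegral_preimage_emb (MeasurableEquiv.measurableEmbedding _)
    (fun z : ℝ × (Fin 1 → ℝ) => g z.1) (Icc (0:ℝ) 1 ×ˢ Icc (0:Fin 1 → ℝ) 1)
  rw [preim2] at this
  have heq : ∀ x : Fin 2 → ℝ,
      (fun z : ℝ × (Fin 1 → ℝ) => g z.1) ((MeasurableEquiv.piFinSuccAbove (fun _ : Fin 2 => ℝ) 0) x)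
        = g (x 0) := by
    intro x; simp [MeasurableEquiv.piFinSuccAbove_apply]
  simp only [heq] at this
  rw [this]
  have : volume (α := ℝ × (Fin 1 → ℝ)) = (volume : Measure ℝ).prod volume := rfl
  rw [this, ← Measure.prod_restrict]
  have hpm := integral_prod_mul (μ := volume.restrict (Icc (0:ℝ) 1))
    (ν := volume.restrict (Icc (0:Fin 1 → ℝ) 1)) (f := g) (g := fun _ => (1:ℝ))
  simp only [mul_one] at hpm
  rw [hpm, setIntegral_const, measureReal_def, Real.volume_Icc_pi]
  norm_num

lemma preim3 : (MeasurableEquiv.piFinSuccAbove (fun _ : Fin 3 => ℝ) 1) ⁻¹'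
    (Icc (0:ℝ) 1 ×ˢ Icc (0:Fin 2 → ℝ) 1) = Icc (0:Fin 3 → ℝ) 1 := by
  ext x
  simp only [MeasurableEquiv.piFinSuccAbove_apply, mem_preimage, mem_prod, mem_Icc,
    Pi.le_def, Fin.removeNth]
  constructor
  · rintro ⟨⟨h1, h2⟩, h3, h4⟩
    constructor <;> intro i <;> fin_cases i
    · exact h3 0
    · exact h1
    · exact h3 1
    · exact h4 0
    · exact h2
    · exact h4 1
  · rintro ⟨h1, h2⟩
    exact ⟨⟨h1 1, h2 1⟩, fun j => by exact h1 (Fin.succAbove 1 j),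
      fun j => by exact h2 (Fin.succAbove 1 j)⟩

lemma box3 (H : ℝ → ℝ → ℝ) (hH : Continuous fun z : ℝ × ℝ => H z.1 z.2) :
    ∫ x in Icc (0:Fin 3 → ℝ) 1, H (x 1) (x 0) =
      ∫ b in Icc (0:ℝ) 1, ∫ a in Icc (0:ℝ) 1, H b a := by
  have hmp := (volume_preserving_piFinSuccAbove (fun _ : Fin 3 => ℝ) 1)
  have key := hmp.setIntegral_preimage_emb (MeasurableEquiv.measurableEmbedding _)
    (fun z : ℝ × (Fin 2 → ℝ) => H z.1 (z.2 0)) (Icc (0:ℝ) 1 ×ˢ Icc (0:Fin 2 → ℝ) 1)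
  rw [preim3] at key
  have heq : ∀ x : Fin 3 → ℝ,
      (fun z : ℝ × (Fin 2 → ℝ) => H z.1 (z.2 0))
        ((MeasurableEquiv.piFinSuccAbove (fun _ : Fin 3 => ℝ) 1) x) = H (x 1) (x 0) := by
    intro x
    simp only [MeasurableEquiv.piFinSuccAbove_apply]
    rfl
  simp only [heq] at key
  rw [key]
  have hcont : Continuous (fun z : ℝ × (Fin 2 → ℝ) => H z.1 (z.2 0)) :=
    hH.comp (continuous_fst.prodMk ((continuous_apply 0).comp continuous_snd))
  have hint : IntegrableOn (fun z : ℝ × (Fin 2 → ℝ) => H z.1 (z.2 0))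
      (Icc (0:ℝ) 1 ×ˢ Icc (0:Fin 2 → ℝ) 1) := by
    exact hcont.continuousOn.integrableOn_compact (isCompact_Icc.prod isCompact_Icc)
  have := setIntegral_prod (μ := (volume : Measure ℝ)) (ν := (volume : Measure (Fin 2 → ℝ)))
    (fun z : ℝ × (Fin 2 → ℝ) => H z.1 (z.2 0)) hint
  rw [Measure.volume_eq_prod, this]
  congr 1
  funext b
  exact box2 (H b)

/-! ### One-dimensional integrals -/

lemma hGp_cont {p : ℝ} (hp : 0 < p) : Continuous fun y : ℝ => |GG y| ^ p := by
  apply (continuous_abs.comp GGcont).rpow_const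
  intro x; right; exact hp.le

lemma hGp_per {p : ℝ} : Function.Periodic (fun y : ℝ => |GG y| ^ p) 1 := fun y => by
  simp only [GGper y]

def CC (p : ℝ) : ℝ := ∫ y in (0:ℝ)..1, |GG y| ^ p

lemma trans_int {p : ℝ} (hp : 0 < p) (c : ℝ) :
    ∫ a in Icc (0:ℝ) 1, |GG (a - c)| ^ p = CC p := by
  rw [integral_Icc_eq_integral_Ioc, ← intervalIntegral.integral_of_le (by norm_num : (0:ℝ) ≤ 1)]
  rw [intervalIntegral.integral_comp_sub_right (fun y => |GG y| ^ p) c]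
  have h := (hGp_per (p := p)).intervalIntegral_add_eq (0 - c) 0
  simp only [zero_sub, zero_add] at h
  rw [show (0:ℝ) - c = -c by ring, show (1:ℝ) - c = -c + 1 by ring] at *
  rw [h]
  rfl

lemma int_Icc_eq_CC {p : ℝ} (hp : 0 < p) : ∫ a in Icc (0:ℝ) 1, |GG a| ^ p = CC p := by
  have := trans_int hp 0
  simpa using this

lemma CCpos {p : ℝ} (hp : 0 < p) : 0 < CC p := by
  have hsmall : 0 < ∫ y in (0:ℝ)..(1/8), |GG y| ^ p := by
    apply intervalIntegral.intervalIntegral_pos_of_pos_on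
    · exact (hGp_cont hp).intervalIntegrable _ _
    · intro y hy
      obtain ⟨hy0, hy8⟩ := hy
      have hπ := Real.pi_pos
      have hcos : 0 < Real.cos (2 * Real.pi * y) := by
        apply Real.cos_pos_of_mem_Ioo
        constructor
        · nlinarith
        · nlinarith
      have hG : 0 < GG y := by unfold GG; positivity
      exact Real.rpow_pos_of_pos (abs_pos.mpr hG.ne') p
    · norm_num
  have hmono : (∫ y in (0:ℝ)..(1/8), |GG y| ^ p) ≤ CC p := by
    apply intervalIntegral.integral_mono_interval (le_refl (0:ℝ)) (by norm_num) (by norm_num)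
    · filter_upwards with y using Real.rpow_nonneg (abs_nonneg _) p
    · exact (hGp_cont hp).intervalIntegrable _ _
  linarith

lemma Kt {p : ℝ} (hp0 : 0 < p) (t : ℝ) :
    ∫ x in Icc (0:Fin 3 → ℝ) 1, |GG (x 1)| ^ p * |GG (x 0 - t * FF (x 1))| ^ p
      = CC p ^ 2 := by
  have hH : Continuous fun z : ℝ × ℝ => |GG z.1| ^ p * |GG (z.2 - t * FF z.1)| ^ p :=
    ((hGp_cont hp0).comp continuous_fst).mul
      ((hGp_cont hp0).comp (continuous_snd.sub (continuous_const.mul (FFcont.comp continuous_fst))))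
  rw [box3 (fun b a => |GG b| ^ p * |GG (a - t * FF b)| ^ p) hH]
  have hinner : ∀ b : ℝ, ∫ a in Icc (0:ℝ) 1, |GG b| ^ p * |GG (a - t * FF b)| ^ p
      = |GG b| ^ p * CC p := by
    intro b
    rw [integral_const_mul, trans_int hp0 (t * FF b)]
  simp only [hinner]
  rw [integral_mul_const, int_Icc_eq_CC hp0]
  ring

/-! ### Main theorem -/

/-- There is no continuous function `φ : ℝ → ℝ` such that every smooth (periodic)
solution of the 3d incompressible Euler equations on the box `(ℝ/ℤ)³` satisfies
`‖u(·,t)‖_{W^{1,p}} ≤ φ(‖u(·,0)‖_{W^{1,p}})` for all `t ≥ 0`. -/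
theorem no_uniform_W1p_bound_for_euler (p : ℝ) (hp : 1 < p) :
    ¬ ∃ φ : ℝ → ℝ, Continuous φ ∧
      ∀ (u : ℝ → (Fin 3 → ℝ) → (Fin 3 → ℝ)) (pr : ℝ → (Fin 3 → ℝ) → ℝ),
        ContDiff ℝ (⊤ : ℕ∞) (fun q : ℝ × (Fin 3 → ℝ) => u q.1 q.2) →
        ContDiff ℝ (⊤ : ℕ∞) (fun q : ℝ × (Fin 3 → ℝ) => pr q.1 q.2) →
        (∀ (t : ℝ) (x : Fin 3 → ℝ) (k : Fin 3 → ℤ),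
          u t (x + fun j => (k j : ℝ)) = u t x) →
        (∀ (t : ℝ) (x : Fin 3 → ℝ) (k : Fin 3 → ℤ),
          pr t (x + fun j => (k j : ℝ)) = pr t x) →
        (∀ (t : ℝ) (x : Fin 3 → ℝ),
          ∑ i : Fin 3, pd i (fun y => u t y i) x = 0) →
        (∀ (t : ℝ) (x : Fin 3 → ℝ) (i : Fin 3),
          deriv (fun s => u s x i) t
            + (∑ j : Fin 3, u t x j * pd j (fun y => u t y i) x)
            + pd i (pr t) x = 0) →
        ∀ t : ℝ, 0 ≤ t → W1p p (u t) ≤ φ (W1p p (u 0)) := by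
  rintro ⟨φ, -, hφ⟩
  have hp0 : 0 < p := lt_trans one_pos hp
  have key : ∀ t : ℝ, 0 ≤ t → W1p p (myu t) ≤ φ (W1p p (myu 0)) :=
    hφ myu (fun _ _ => 0) myu_smooth contDiff_const
      (fun t x k => myu_periodic t x k) (fun _ _ _ => rfl)
      myu_div (fun t x i => myu_euler t x i)
  set M := φ (W1p p (myu 0)) with hM
  set c : ℝ := (CC p ^ 2) ^ (1/p) with hc
  have hcpos : 0 < c := Real.rpow_pos_of_pos (pow_pos (CCpos hp0) 2) _
  have low : ∀ t : ℝ, 0 ≤ t → t * c ≤ W1p p (myu t) := by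
    intro t ht
    have hterm : (∫ x in Icc (0:Fin 3 → ℝ) 1, |pd 1 (fun y => myu t y 2) x| ^ p)
        = t ^ p * CC p ^ 2 := by
      have hfun : (fun x : Fin 3 → ℝ => |pd 1 (fun y => myu t y 2) x| ^ p)
          = fun x => t ^ p * (|GG (x 1)| ^ p * |GG (x 0 - t * FF (x 1))| ^ p) := by
        funext x
        rw [pd_myu2]
        rw [if_neg (show (1:Fin 3) ≠ 0 by decide), if_pos rfl]
        rw [abs_mul, abs_neg, abs_mul, abs_of_nonneg ht]
        rw [Real.mul_rpow (abs_nonneg _) (mul_nonneg ht (abs_nonneg _)),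
            Real.mul_rpow ht (abs_nonneg _)]
        ring
      rw [hfun, integral_const_mul, Kt hp0 t]
    -- lower bound on W1pP
    have hB21 : t ^ p * CC p ^ 2 ≤ W1pP p (myu t) := by
      have hnn : ∀ (f : (Fin 3 → ℝ) → ℝ),
          0 ≤ ∫ x in Icc (0:Fin 3 → ℝ) 1, |f x| ^ p := fun f =>
        setIntegral_nonneg measurableSet_Icc (fun x _ => Real.rpow_nonneg (abs_nonneg _) p)
      have h1 : 0 ≤ ∑ i : Fin 3, ∫ x in Icc (0:Fin 3 → ℝ) 1, |myu t x i| ^ p :=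
        Finset.sum_nonneg fun i _ => hnn _
      have h2 : (∫ x in Icc (0:Fin 3 → ℝ) 1, |pd 1 (fun y => myu t y 2) x| ^ p)
          ≤ ∑ j : Fin 3, ∫ x in Icc (0:Fin 3 → ℝ) 1, |pd j (fun y => myu t y 2) x| ^ p :=
        Finset.single_le_sum
          (f := fun j : Fin 3 => ∫ x in Icc (0:Fin 3 → ℝ) 1, |pd j (fun y => myu t y 2) x| ^ p)
          (fun j _ => hnn _) (Finset.mem_univ (1 : Fin 3))
      have h3 : (∑ j : Fin 3, ∫ x in Icc (0:Fin 3 → ℝ) 1, |pd j (fun y => myu t y 2) x| ^ p)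
          ≤ ∑ i : Fin 3, ∑ j : Fin 3,
              ∫ x in Icc (0:Fin 3 → ℝ) 1, |pd j (fun y => myu t y i) x| ^ p :=
        Finset.single_le_sum
          (f := fun i : Fin 3 => ∑ j : Fin 3,
            ∫ x in Icc (0:Fin 3 → ℝ) 1, |pd j (fun y => myu t y i) x| ^ p)
          (fun i _ => Finset.sum_nonneg fun j _ => hnn _)
          (Finset.mem_univ (2 : Fin 3))
      rw [W1pP]
      rw [← hterm]
      linarith
    have h0 : (0:ℝ) ≤ t ^ p * CC p ^ 2 :=
      mul_nonneg (Real.rpow_nonneg ht p) (sq_nonneg _)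
    have hmono := Real.rpow_le_rpow h0 hB21 (by positivity : (0:ℝ) ≤ 1/p)
    have hcalc : (t ^ p * CC p ^ 2) ^ (1/p) = t * c := by
      rw [Real.mul_rpow (Real.rpow_nonneg ht p) (sq_nonneg _), hc]
      congr 1
      rw [← Real.rpow_mul ht, mul_one_div_cancel (ne_of_gt hp0), Real.rpow_one]
    rw [← hcalc]
    exact hmono.trans_eq rfl
  -- choose a large time
  set t₀ : ℝ := max 0 ((M + 1) / c) with ht₀
  have ht₀0 : 0 ≤ t₀ := le_max_left _ _
  have h1 := key t₀ ht₀0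
  have h2 := low t₀ ht₀0
  have h3 : M + 1 ≤ t₀ * c := by
    have : (M + 1) / c ≤ t₀ := le_max_right _ _
    calc M + 1 = ((M + 1) / c) * c := by field_simp
    _ ≤ t₀ * c := mul_le_mul_of_nonneg_right this hcpos.le
  have : W1p p (myu t₀) ≤ M := h1
  linarith

end
end

section
/- Let u_ν be Leray–Hopf solutions of the Navier–Stokes equations on [0,T] with common initial data u(0), satisfying the energy inequality (1/2)‖u_ν(T)‖² + ν∫₀ᵀ‖∇u_ν‖² dt ≤ (1/2)‖u(0)‖². Suppose u_ν(T) ⇀ u(T) weakly in L² where u is a smooth Euler solution conserving energy, ‖u(T)‖ = ‖u(0)‖. Then lim_{ν→0} ν∫₀ᵀ∫_Ω |∇u_ν|² dx dt = 0 and u_ν(T) → u(T) strongly in L². -/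
open MeasureTheory Filter intervalIntegral
open scoped Topology RealInnerProductSpace

noncomputable section


lemma integrable_inner_of_memL2 {α : Type*} [MeasurableSpace α] {μ : Measure α}
    {E : Type*} [NormedAddCommGroup E] [InnerProductSpace ℝ E]
    {f g : α → E} (hf : MemLp f 2 μ) (hg : MemLp g 2 μ) :
    Integrable (fun x => ⟪f x, g x⟫) μ := by
  have hsm : MemLp (fun x => ‖f x‖ • ‖g x‖) 1 μ :=
    hg.norm.smul hf.norm (hpqr := ⟨by rw [inv_one, ENNReal.inv_two_add_inv_two]⟩)
  have hmul : Integrable (fun x => ‖f x‖ * ‖g x‖) μ := by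
    simpa [smul_eq_mul] using memLp_one_iff_integrable.mp hsm
  refine hmul.mono' (hf.1.inner hg.1) ?_
  filter_upwards with x
  simpa using abs_real_inner_le_norm (f x) (g x)

lemma integrable_normsq_of_memL2 {α : Type*} [MeasurableSpace α] {μ : Measure α}
    {E : Type*} [NormedAddCommGroup E] [InnerProductSpace ℝ E]
    {f : α → E} (hf : MemLp f 2 μ) :
    Integrable (fun x => ‖f x‖ ^ 2) μ := by
  have := integrable_inner_of_memL2 hf hf
  simpa [real_inner_self_eq_norm_sq] using this

lemma expand_sub_sq {α : Type*} [MeasurableSpace α] {μ : Measure α}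
    {E : Type*} [NormedAddCommGroup E] [InnerProductSpace ℝ E]
    {f g : α → E} (hf : MemLp f 2 μ) (hg : MemLp g 2 μ) :
    ∫ x, ‖f x - g x‖ ^ 2 ∂μ
      = (∫ x, ‖f x‖ ^ 2 ∂μ) - 2 * (∫ x, ⟪f x, g x⟫ ∂μ) + ∫ x, ‖g x‖ ^ 2 ∂μ := by
  have h1 := integrable_normsq_of_memL2 hf
  have h2 := integrable_inner_of_memL2 hf hg
  have h3 := integrable_normsq_of_memL2 hg
  have h12 : Integrable (fun x => ‖f x‖ ^ 2 - 2 * ⟪f x, g x⟫) μ := h1.sub (h2.const_mul 2)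
  have heq : (fun x => ‖f x - g x‖ ^ 2)
      = fun x => ‖f x‖ ^ 2 - 2 * ⟪f x, g x⟫ + ‖g x‖ ^ 2 :=
    funext fun x => norm_sub_sq_real (f x) (g x)
  rw [heq, integral_add h12 h3, integral_sub h1 (h2.const_mul 2), MeasureTheory.integral_const_mul]


variable {d : ℕ}

/-- Divergence of a vector field on `ℝ^d`. -/
def divg (f : EuclideanSpace ℝ (Fin d) → EuclideanSpace ℝ (Fin d))
    (x : EuclideanSpace ℝ (Fin d)) : ℝ :=
  ∑ i : Fin d, fderiv ℝ f x (EuclideanSpace.single i (1:ℝ)) i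

/-- Kato's implication (iii) ⇒ (iv): if Leray–Hopf solutions `u_ν` with common
initial data satisfy the energy inequality, converge weakly in `L²` at time `T` to
a smooth Euler solution `u` that conserves energy, then the viscous dissipation
`ν∫₀ᵀ∫|∇u_ν|²` vanishes as `ν → 0` and `u_ν(T) → u(T)` strongly in `L²`. -/
theorem kato_weak_to_strong_dissipation_vanishes
    (Ω : Set (EuclideanSpace ℝ (Fin d))) (hΩ : IsOpen Ω)
    (T : ℝ) (hT : 0 < T)
    (uv : ℝ → ℝ → EuclideanSpace ℝ (Fin d) → EuclideanSpace ℝ (Fin d))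
    (u : ℝ → EuclideanSpace ℝ (Fin d) → EuclideanSpace ℝ (Fin d))
    (pr : ℝ → EuclideanSpace ℝ (Fin d) → ℝ)
    -- `u` is a smooth solution of the Euler equations on `Ω`:
    (hu_smooth : ContDiff ℝ (⊤ : ℕ∞) (fun p : ℝ × EuclideanSpace ℝ (Fin d) => u p.1 p.2))
    (hu_div : ∀ t, ∀ x ∈ Ω, divg (u t) x = 0)
    (hu_euler : ∀ t ∈ Set.Icc (0:ℝ) T, ∀ x ∈ Ω,
      deriv (fun s => u s x) t + fderiv ℝ (u t) x (u t x) + gradient (pr t) x = 0)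
    (hu_L2 : ∀ t ∈ Set.Icc (0:ℝ) T, MemLp (u t) 2 (volume.restrict Ω))
    (huv_L2 : ∀ ν > (0:ℝ), ∀ t ∈ Set.Icc (0:ℝ) T,
      MemLp (uv ν t) 2 (volume.restrict Ω))
    -- common initial data:
    (hinit : ∀ ν > (0:ℝ), ∀ x, uv ν 0 x = u 0 x)
    -- energy inequality for the Leray–Hopf solutions:
    (henergy : ∀ ν > (0:ℝ),
      (1/2) * (∫ x in Ω, ‖uv ν T x‖ ^ 2)
        + ν * ∫ t in (0:ℝ)..T, ∫ x in Ω, ‖fderiv ℝ (uv ν t) x‖ ^ 2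
        ≤ (1/2) * ∫ x in Ω, ‖u 0 x‖ ^ 2)
    -- weak `L²` convergence of `uv ν T` to `u T`:
    (hweak : ∀ φ : EuclideanSpace ℝ (Fin d) → EuclideanSpace ℝ (Fin d),
      MemLp φ 2 (volume.restrict Ω) →
      Tendsto (fun ν => ∫ x in Ω, ⟪uv ν T x, φ x⟫) (𝓝[>] (0:ℝ))
        (𝓝 (∫ x in Ω, ⟪u T x, φ x⟫)))
    -- energy conservation of the limit Euler solution:
    (hcons : (∫ x in Ω, ‖u T x‖ ^ 2) = ∫ x in Ω, ‖u 0 x‖ ^ 2) :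
    Tendsto (fun ν => ν * ∫ t in (0:ℝ)..T, ∫ x in Ω, ‖fderiv ℝ (uv ν t) x‖ ^ 2)
        (𝓝[>] (0:ℝ)) (𝓝 0) ∧
    Tendsto (fun ν => ∫ x in Ω, ‖uv ν T x - u T x‖ ^ 2) (𝓝[>] (0:ℝ)) (𝓝 0) := by
  have hTmem : T ∈ Set.Icc (0:ℝ) T := ⟨hT.le, le_rfl⟩
  have huT := hu_L2 T hTmem
  set E : ℝ := ∫ x in Ω, ‖u 0 x‖ ^ 2 with hE
  have hIuT : (∫ x in Ω, ⟪u T x, u T x⟫) = E := by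
    rw [← hcons]; simp_rw [real_inner_self_eq_norm_sq]
  have hI : Tendsto (fun ν => ∫ x in Ω, ⟪uv ν T x, u T x⟫) (𝓝[>] (0:ℝ)) (𝓝 E) := by
    have := hweak (u T) huT
    rwa [hIuT] at this
  have hνpos : ∀ᶠ ν in 𝓝[>] (0:ℝ), (0:ℝ) < ν := self_mem_nhdsWithin
  have key : ∀ᶠ ν in 𝓝[>] (0:ℝ),
      (0 ≤ ν * ∫ t in (0:ℝ)..T, ∫ x in Ω, ‖fderiv ℝ (uv ν t) x‖ ^ 2
        ∧ ν * (∫ t in (0:ℝ)..T, ∫ x in Ω, ‖fderiv ℝ (uv ν t) x‖ ^ 2)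
            ≤ E - ∫ x in Ω, ⟪uv ν T x, u T x⟫) ∧
      (0 ≤ ∫ x in Ω, ‖uv ν T x - u T x‖ ^ 2
        ∧ (∫ x in Ω, ‖uv ν T x - u T x‖ ^ 2)
            ≤ 2 * (E - ∫ x in Ω, ⟪uv ν T x, u T x⟫)) := by
    filter_upwards [hνpos] with ν hν
    set D : ℝ := ν * ∫ t in (0:ℝ)..T, ∫ x in Ω, ‖fderiv ℝ (uv ν t) x‖ ^ 2 with hD
    set A : ℝ := ∫ x in Ω, ‖uv ν T x‖ ^ 2 with hA
    set I : ℝ := ∫ x in Ω, ⟪uv ν T x, u T x⟫ with hIdef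
    set F : ℝ := ∫ x in Ω, ‖uv ν T x - u T x‖ ^ 2 with hF
    have hDnn : 0 ≤ D :=
      mul_nonneg hν.le (intervalIntegral.integral_nonneg hT.le
        (fun t _ => integral_nonneg fun x => sq_nonneg _))
    have hen : (1/2) * A + D ≤ (1/2) * E := henergy ν hν
    have hexp : F = A - 2 * I + E := by
      rw [hF, expand_sub_sq (huv_L2 ν hν T hTmem) huT, ← hA, ← hIdef, hcons]
    have hFnn : 0 ≤ F := integral_nonneg fun x => sq_nonneg _
    refine ⟨⟨hDnn, ?_⟩, hFnn, ?_⟩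
    · nlinarith [hFnn, hexp, hen]
    · nlinarith [hexp, hen, hDnn]
  have hlim : Tendsto (fun ν => E - ∫ x in Ω, ⟪uv ν T x, u T x⟫)
      (𝓝[>] (0:ℝ)) (𝓝 0) := by
    have := hI.const_sub E
    simpa using this
  have hlim2 : Tendsto (fun ν => 2 * (E - ∫ x in Ω, ⟪uv ν T x, u T x⟫))
      (𝓝[>] (0:ℝ)) (𝓝 0) := by
    have := hlim.const_mul (2:ℝ)
    simpa using this
  constructor
  · exact tendsto_of_tendsto_of_tendsto_of_le_of_le' tendsto_const_nhds hlim
      (key.mono fun ν h => h.1.1) (key.mono fun ν h => h.1.2)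
  · exact tendsto_of_tendsto_of_tendsto_of_le_of_le' tendsto_const_nhds hlim2
      (key.mono fun ν h => h.2.1) (key.mono fun ν h => h.2.2)

end
end
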